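/- Fix θ ∈ [0,2π) with θ ≠ 0 and θ ≠ π and an initial coin state (α, β, γ) with |α|² + |β|² + |γ|² = 1. For all a, b ∈ ℝ and all t ∈ ℕ, the Fourier transform of the walk at even times is given by ψ̂_{2t}(a,b) = M(a,b)^t · (α, β, γ), where M(a,b) = R(−a,−b)·C̃·R(a,b)·C̃. -/
import Mathlib


open Filter Real

/-- The 3×3 coin matrix `C̃` with parameters `c = cos θ`, `s = sin θ`. -/
noncomputable def coinMat (c s : ℝ) : Matrix (Fin 3) (Fin 3) ℂ :=
  !![-(1 + c) / 2, s / Real.sqrt 2, (1 - c) / 2;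
     s / Real.sqrt 2, c, s / Real.sqrt 2;
     (1 - c) / 2, s / Real.sqrt 2, -(1 + c) / 2]

/-- The shift `S1` step (even time → odd time). -/
noncomputable def stepS1 (C : Matrix (Fin 3) (Fin 3) ℂ) (ψ : ℤ × ℤ → Fin 3 → ℂ) :
    ℤ × ℤ → Fin 3 → ℂ :=
  fun p => ![C.mulVec (ψ (p.1, p.2 - 1)) 0,
             C.mulVec (ψ (p.1 + 1, p.2)) 1,
             C.mulVec (ψ (p.1, p.2 + 1)) 2]

/-- The shift `S2` step (odd time → even time). -/
noncomputable def stepS2 (C : Matrix (Fin 3) (Fin 3) ℂ) (ψ : ℤ × ℤ → Fin 3 → ℂ) :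
    ℤ × ℤ → Fin 3 → ℂ :=
  fun p => ![C.mulVec (ψ (p.1, p.2 + 1)) 0,
             C.mulVec (ψ (p.1 - 1, p.2)) 1,
             C.mulVec (ψ (p.1, p.2 - 1)) 2]

/-- Amplitudes `ψ_t` of the 3-state hexagonal-lattice quantum walk started at the origin
with initial coin state `init`. -/
noncomputable def walk (C : Matrix (Fin 3) (Fin 3) ℂ) (init : Fin 3 → ℂ) :
    ℕ → ℤ × ℤ → Fin 3 → ℂ
  | 0 => fun p => if p = (0, 0) then init else 0
  | t + 1 => if Even t then stepS1 C (walk C init t) else stepS2 C (walk C init t)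

/-- The diagonal shift matrix `R(a,b) = diag(e^{-ib}, e^{ia}, e^{ib})`. -/
noncomputable def Rmat (a b : ℝ) : Matrix (Fin 3) (Fin 3) ℂ :=
  Matrix.diagonal ![Complex.exp (-(Complex.I * b)), Complex.exp (Complex.I * a),
    Complex.exp (Complex.I * b)]

/-- The Fourier transform `ψ̂(a,b) = ∑_{(x,y)∈ℤ²} e^{-i(ax+by)} ψ(x,y)`. -/
noncomputable def qft (ψ : ℤ × ℤ → Fin 3 → ℂ) (a b : ℝ) : Fin 3 → ℂ :=
  fun j => ∑' p : ℤ × ℤ,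
    Complex.exp (-(Complex.I * (a * (p.1 : ℝ) + b * (p.2 : ℝ)))) * ψ p j


lemma Rmat_mulVec (a b : ℝ) (v : Fin 3 → ℂ) :
    (Rmat a b).mulVec v = ![Complex.exp (-(Complex.I * b)) * v 0,
      Complex.exp (Complex.I * a) * v 1, Complex.exp (Complex.I * b) * v 2] := by
  funext j; fin_cases j <;> simp [Rmat, Matrix.mulVec_diagonal]

lemma tsum_shift (f : ℤ × ℤ → ℂ) (a b : ℝ) (d : ℤ × ℤ) :
    (∑' p : ℤ × ℤ, Complex.exp (-(Complex.I * (a * (p.1 : ℝ) + b * (p.2 : ℝ)))) * f (p + d))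
    = Complex.exp (Complex.I * (a * (d.1 : ℝ) + b * (d.2 : ℝ))) *
      ∑' p : ℤ × ℤ, Complex.exp (-(Complex.I * (a * (p.1 : ℝ) + b * (p.2 : ℝ)))) * f p := by
  rw [← tsum_mul_left, ← (Equiv.subRight d).tsum_eq]
  apply tsum_congr
  intro q
  simp only [Equiv.subRight_apply, sub_add_cancel]
  rw [← mul_assoc, ← Complex.exp_add]
  congr 2
  push_cast [Prod.fst_sub, Prod.snd_sub]
  ring

lemma tsum_mulVec (C : Matrix (Fin 3) (Fin 3) ℂ) (ψ : ℤ × ℤ → Fin 3 → ℂ)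
    (s : Finset (ℤ × ℤ)) (hs : ∀ p ∉ s, ψ p = 0) (w : ℤ × ℤ → ℂ) (j : Fin 3) :
    (∑' p : ℤ × ℤ, w p * C.mulVec (ψ p) j)
    = C.mulVec (fun k => ∑' p : ℤ × ℤ, w p * ψ p k) j := by
  have h1 : ∀ p, w p * C.mulVec (ψ p) j = ∑ k, C j k * (w p * ψ p k) := by
    intro p
    simp only [Matrix.mulVec, dotProduct, Finset.mul_sum]
    exact Finset.sum_congr rfl fun k _ => by ring
  calc (∑' p : ℤ × ℤ, w p * C.mulVec (ψ p) j)
      = ∑' p : ℤ × ℤ, ∑ k, C j k * (w p * ψ p k) := tsum_congr h1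
    _ = ∑ k, ∑' p : ℤ × ℤ, C j k * (w p * ψ p k) := by
        refine Summable.tsum_finsetSum fun k _ => summable_of_ne_finset_zero (s := s) fun p hp => ?_
        simp [hs p hp]
    _ = ∑ k, C j k * ∑' p : ℤ × ℤ, w p * ψ p k := by
        exact Finset.sum_congr rfl fun k _ => tsum_mul_left
    _ = _ := by simp [Matrix.mulVec, dotProduct]

lemma walk_finsupp (C : Matrix (Fin 3) (Fin 3) ℂ) (init : Fin 3 → ℂ) (t : ℕ) :
    ∃ s : Finset (ℤ × ℤ), ∀ p ∉ s, walk C init t p = 0 := by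
  induction t with
  | zero =>
    refine ⟨{(0, 0)}, fun p hp => ?_⟩
    simp only [Finset.mem_singleton] at hp
    simp only [walk]
    rw [if_neg hp]
  | succ t ih =>
    obtain ⟨s, hs⟩ := ih
    refine ⟨(s.image fun q => (q.1, q.2 + 1)) ∪ (s.image fun q => (q.1, q.2 - 1)) ∪
      (s.image fun q => (q.1 + 1, q.2)) ∪ (s.image fun q => (q.1 - 1, q.2)), fun p hp => ?_⟩
    simp only [Finset.mem_union, Finset.mem_image, not_or, not_exists, not_and] at hp
    obtain ⟨⟨⟨h1, h2⟩, h3⟩, h4⟩ := hp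
    have hup : (p.1, p.2 - 1) ∉ s := fun h => h1 _ h (by simp)
    have hdo : (p.1, p.2 + 1) ∉ s := fun h => h2 _ h (by simp)
    have hle : (p.1 + 1, p.2) ∉ s := fun h => h4 _ h (by simp)
    have hri : (p.1 - 1, p.2) ∉ s := fun h => h3 _ h (by simp)
    show walk C init (t + 1) p = 0
    rw [walk]
    by_cases h : Even t <;>
      · simp only [h, if_true, if_false, stepS1, stepS2]
        funext j
        fin_cases j <;> simp [hs _ hup, hs _ hdo, hs _ hle, hs _ hri]

lemma qft_stepS1 (C : Matrix (Fin 3) (Fin 3) ℂ) (ψ : ℤ × ℤ → Fin 3 → ℂ)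
    (s : Finset (ℤ × ℤ)) (hs : ∀ p ∉ s, ψ p = 0) (a b : ℝ) :
    qft (stepS1 C ψ) a b = (Rmat a b * C).mulVec (qft ψ a b) := by
  funext j
  rw [← Matrix.mulVec_mulVec, Rmat_mulVec]
  fin_cases j
  · show (∑' p : ℤ × ℤ, Complex.exp (-(Complex.I * (a * (p.1 : ℝ) + b * (p.2 : ℝ))))
        * stepS1 C ψ p 0)
        = Complex.exp (-(Complex.I * (b:ℂ))) * C.mulVec (qft ψ a b) 0
    have h1 : ∀ p : ℤ × ℤ, stepS1 C ψ p 0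
        = (fun q => C.mulVec (ψ q) 0) (p + ((0, -1) : ℤ × ℤ)) := by
      intro p
      have hp : p + ((0, -1) : ℤ × ℤ) = (p.1, p.2 - 1) := by
        simp [Prod.ext_iff, sub_eq_add_neg]
      rw [hp]
      rfl
    have h2 : (∑' p : ℤ × ℤ, Complex.exp (-(Complex.I * (a * (p.1 : ℝ) + b * (p.2 : ℝ))))
        * stepS1 C ψ p 0)
        = ∑' p : ℤ × ℤ, Complex.exp (-(Complex.I * (a * (p.1 : ℝ) + b * (p.2 : ℝ))))
          * (fun q => C.mulVec (ψ q) 0) (p + ((0, -1) : ℤ × ℤ)) :=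
      tsum_congr fun p => by rw [h1 p]
    rw [h2, tsum_shift (fun q => C.mulVec (ψ q) 0) a b (0, -1),
      tsum_mulVec C ψ s hs]
    congr 1
    congr 1
    push_cast
    ring
  · show (∑' p : ℤ × ℤ, Complex.exp (-(Complex.I * (a * (p.1 : ℝ) + b * (p.2 : ℝ))))
        * stepS1 C ψ p 1)
        = Complex.exp (Complex.I * (a:ℂ)) * C.mulVec (qft ψ a b) 1
    have h1 : ∀ p : ℤ × ℤ, stepS1 C ψ p 1
        = (fun q => C.mulVec (ψ q) 1) (p + ((1, 0) : ℤ × ℤ)) := by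
      intro p
      have hp : p + ((1, 0) : ℤ × ℤ) = (p.1 + 1, p.2) := by
        simp [Prod.ext_iff, sub_eq_add_neg]
      rw [hp]
      rfl
    have h2 : (∑' p : ℤ × ℤ, Complex.exp (-(Complex.I * (a * (p.1 : ℝ) + b * (p.2 : ℝ))))
        * stepS1 C ψ p 1)
        = ∑' p : ℤ × ℤ, Complex.exp (-(Complex.I * (a * (p.1 : ℝ) + b * (p.2 : ℝ))))
          * (fun q => C.mulVec (ψ q) 1) (p + ((1, 0) : ℤ × ℤ)) :=
      tsum_congr fun p => by rw [h1 p]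
    rw [h2, tsum_shift (fun q => C.mulVec (ψ q) 1) a b (1, 0),
      tsum_mulVec C ψ s hs]
    congr 1
    congr 1
    push_cast
    ring
  · show (∑' p : ℤ × ℤ, Complex.exp (-(Complex.I * (a * (p.1 : ℝ) + b * (p.2 : ℝ))))
        * stepS1 C ψ p 2)
        = Complex.exp (Complex.I * (b:ℂ)) * C.mulVec (qft ψ a b) 2
    have h1 : ∀ p : ℤ × ℤ, stepS1 C ψ p 2
        = (fun q => C.mulVec (ψ q) 2) (p + ((0, 1) : ℤ × ℤ)) := by
      intro p
      have hp : p + ((0, 1) : ℤ × ℤ) = (p.1, p.2 + 1) := by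
        simp [Prod.ext_iff, sub_eq_add_neg]
      rw [hp]
      rfl
    have h2 : (∑' p : ℤ × ℤ, Complex.exp (-(Complex.I * (a * (p.1 : ℝ) + b * (p.2 : ℝ))))
        * stepS1 C ψ p 2)
        = ∑' p : ℤ × ℤ, Complex.exp (-(Complex.I * (a * (p.1 : ℝ) + b * (p.2 : ℝ))))
          * (fun q => C.mulVec (ψ q) 2) (p + ((0, 1) : ℤ × ℤ)) :=
      tsum_congr fun p => by rw [h1 p]
    rw [h2, tsum_shift (fun q => C.mulVec (ψ q) 2) a b (0, 1),
      tsum_mulVec C ψ s hs]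
    congr 1
    congr 1
    push_cast
    ring

lemma qft_stepS2 (C : Matrix (Fin 3) (Fin 3) ℂ) (ψ : ℤ × ℤ → Fin 3 → ℂ)
    (s : Finset (ℤ × ℤ)) (hs : ∀ p ∉ s, ψ p = 0) (a b : ℝ) :
    qft (stepS2 C ψ) a b = (Rmat (-a) (-b) * C).mulVec (qft ψ a b) := by
  funext j
  rw [← Matrix.mulVec_mulVec, Rmat_mulVec]
  fin_cases j
  · show (∑' p : ℤ × ℤ, Complex.exp (-(Complex.I * (a * (p.1 : ℝ) + b * (p.2 : ℝ))))
        * stepS2 C ψ p 0)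
        = Complex.exp (-(Complex.I * ((-b:ℝ):ℂ))) * C.mulVec (qft ψ a b) 0
    have h1 : ∀ p : ℤ × ℤ, stepS2 C ψ p 0
        = (fun q => C.mulVec (ψ q) 0) (p + ((0, 1) : ℤ × ℤ)) := by
      intro p
      have hp : p + ((0, 1) : ℤ × ℤ) = (p.1, p.2 + 1) := by
        simp [Prod.ext_iff, sub_eq_add_neg]
      rw [hp]
      rfl
    have h2 : (∑' p : ℤ × ℤ, Complex.exp (-(Complex.I * (a * (p.1 : ℝ) + b * (p.2 : ℝ))))
        * stepS2 C ψ p 0)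
        = ∑' p : ℤ × ℤ, Complex.exp (-(Complex.I * (a * (p.1 : ℝ) + b * (p.2 : ℝ))))
          * (fun q => C.mulVec (ψ q) 0) (p + ((0, 1) : ℤ × ℤ)) :=
      tsum_congr fun p => by rw [h1 p]
    rw [h2, tsum_shift (fun q => C.mulVec (ψ q) 0) a b (0, 1),
      tsum_mulVec C ψ s hs]
    congr 1
    congr 1
    push_cast
    ring
  · show (∑' p : ℤ × ℤ, Complex.exp (-(Complex.I * (a * (p.1 : ℝ) + b * (p.2 : ℝ))))
        * stepS2 C ψ p 1)
        = Complex.exp (Complex.I * ((-a:ℝ):ℂ)) * C.mulVec (qft ψ a b) 1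
    have h1 : ∀ p : ℤ × ℤ, stepS2 C ψ p 1
        = (fun q => C.mulVec (ψ q) 1) (p + ((-1, 0) : ℤ × ℤ)) := by
      intro p
      have hp : p + ((-1, 0) : ℤ × ℤ) = (p.1 - 1, p.2) := by
        simp [Prod.ext_iff, sub_eq_add_neg]
      rw [hp]
      rfl
    have h2 : (∑' p : ℤ × ℤ, Complex.exp (-(Complex.I * (a * (p.1 : ℝ) + b * (p.2 : ℝ))))
        * stepS2 C ψ p 1)
        = ∑' p : ℤ × ℤ, Complex.exp (-(Complex.I * (a * (p.1 : ℝ) + b * (p.2 : ℝ))))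
          * (fun q => C.mulVec (ψ q) 1) (p + ((-1, 0) : ℤ × ℤ)) :=
      tsum_congr fun p => by rw [h1 p]
    rw [h2, tsum_shift (fun q => C.mulVec (ψ q) 1) a b (-1, 0),
      tsum_mulVec C ψ s hs]
    congr 1
    congr 1
    push_cast
    ring
  · show (∑' p : ℤ × ℤ, Complex.exp (-(Complex.I * (a * (p.1 : ℝ) + b * (p.2 : ℝ))))
        * stepS2 C ψ p 2)
        = Complex.exp (Complex.I * ((-b:ℝ):ℂ)) * C.mulVec (qft ψ a b) 2
    have h1 : ∀ p : ℤ × ℤ, stepS2 C ψ p 2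
        = (fun q => C.mulVec (ψ q) 2) (p + ((0, -1) : ℤ × ℤ)) := by
      intro p
      have hp : p + ((0, -1) : ℤ × ℤ) = (p.1, p.2 - 1) := by
        simp [Prod.ext_iff, sub_eq_add_neg]
      rw [hp]
      rfl
    have h2 : (∑' p : ℤ × ℤ, Complex.exp (-(Complex.I * (a * (p.1 : ℝ) + b * (p.2 : ℝ))))
        * stepS2 C ψ p 2)
        = ∑' p : ℤ × ℤ, Complex.exp (-(Complex.I * (a * (p.1 : ℝ) + b * (p.2 : ℝ))))
          * (fun q => C.mulVec (ψ q) 2) (p + ((0, -1) : ℤ × ℤ)) :=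
      tsum_congr fun p => by rw [h1 p]
    rw [h2, tsum_shift (fun q => C.mulVec (ψ q) 2) a b (0, -1),
      tsum_mulVec C ψ s hs]
    congr 1
    congr 1
    push_cast
    ring

lemma qft_walk_zero (C : Matrix (Fin 3) (Fin 3) ℂ) (init : Fin 3 → ℂ) (a b : ℝ) :
    qft (walk C init 0) a b = init := by
  funext j
  show (∑' p : ℤ × ℤ, Complex.exp (-(Complex.I * (a * (p.1 : ℝ) + b * (p.2 : ℝ))))
      * walk C init 0 p j) = init j
  rw [tsum_eq_single ((0, 0) : ℤ × ℤ)]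
  · simp [walk]
  · intro p hp
    have h0 : walk C init 0 p = 0 := by simp only [walk]; rw [if_neg hp]
    simp [h0]

lemma pow_step_mulVec (A B : Matrix (Fin 3) (Fin 3) ℂ) (v : Fin 3 → ℂ) (t : ℕ) :
    A.mulVec (B.mulVec (((A * B) ^ t).mulVec v)) = ((A * B) ^ (t + 1)).mulVec v := by
  rw [Matrix.mulVec_mulVec, Matrix.mulVec_mulVec, pow_succ']

theorem fourier_even_time_solution (θ : ℝ) (hθ : θ ∈ Set.Ico 0 (2 * Real.pi))
    (hθ0 : θ ≠ 0) (hθpi : θ ≠ Real.pi) (α β γ : ℂ)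
    (hnorm : ‖α‖ ^ 2 + ‖β‖ ^ 2 + ‖γ‖ ^ 2 = 1) (a b : ℝ) (t : ℕ) :
    qft (walk (coinMat (Real.cos θ) (Real.sin θ)) ![α, β, γ] (2 * t)) a b
      = ((Rmat (-a) (-b) * coinMat (Real.cos θ) (Real.sin θ) * Rmat a b *
          coinMat (Real.cos θ) (Real.sin θ)) ^ t).mulVec ![α, β, γ] := by
  set C := coinMat (Real.cos θ) (Real.sin θ) with hC
  set v : Fin 3 → ℂ := ![α, β, γ] with hv
  have hbase : Rmat (-a) (-b) * C * Rmat a b * C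
      = (Rmat (-a) (-b) * C) * (Rmat a b * C) := by
    rw [mul_assoc (Rmat (-a) (-b) * C) (Rmat a b) C]
  induction t with
  | zero =>
    rw [Nat.mul_zero, pow_zero, Matrix.one_mulVec]
    exact qft_walk_zero C v a b
  | succ t ih =>
    have h2t1 : walk C v (2 * t + 1) = stepS1 C (walk C v (2 * t)) := by
      rw [walk]
      simp [even_two_mul t]
    have h2t2 : walk C v (2 * (t + 1)) = stepS2 C (walk C v (2 * t + 1)) := by
      have h : 2 * (t + 1) = (2 * t + 1) + 1 := by ring
      rw [h, walk]
      simp [Nat.even_add_one, even_two_mul t]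
    obtain ⟨s0, hs0⟩ := walk_finsupp C v (2 * t)
    obtain ⟨s1, hs1⟩ := walk_finsupp C v (2 * t + 1)
    rw [h2t2, qft_stepS2 C _ s1 hs1, h2t1, qft_stepS1 C _ s0 hs0, ih, hbase]
    exact pow_step_mulVec _ _ v t
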